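/- arXiv:math/0509374 — 5 statements merged into one kernel-verified Lean document; each statement's English description precedes it below -/
import Mathlib

section
/- Let X be a nonzero lush Banach space over 𝕂 = ℝ or ℂ. Then the numerical index of X equals 1, i.e., n(X) = 1. -/
open Filter Topology Metric

/-- The numerical radius of a bounded linear operator `T` on `X`:
`v(T) = sup { |x*(Tx)| : x ∈ S_X, x* ∈ S_{X*}, x*(x) = 1 }`. -/
noncomputable def numRadius (𝕜 : Type*) {X : Type*} [RCLike 𝕜] [NormedAddCommGroup X]
    [NormedSpace 𝕜 X] (T : X →L[𝕜] X) : ℝ :=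
  sSup {r : ℝ | ∃ (x : X) (f : X →L[𝕜] 𝕜), ‖x‖ = 1 ∧ ‖f‖ = 1 ∧ f x = 1 ∧ r = ‖f (T x)‖}

/-- The numerical index of `X`: `n(X) = inf { v(T) : T ∈ L(X), ‖T‖ = 1 }`. -/
noncomputable def numIndex (𝕜 X : Type*) [RCLike 𝕜] [NormedAddCommGroup X]
    [NormedSpace 𝕜 X] : ℝ :=
  sInf {r : ℝ | ∃ T : X →L[𝕜] X, ‖T‖ = 1 ∧ r = numRadius 𝕜 T}

/-- The slice `S(B_X, f, ε) = {x ∈ B_X : Re f(x) > 1 - ε}`. -/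
def lushSlice {𝕜 X : Type*} [RCLike 𝕜] [NormedAddCommGroup X] [NormedSpace 𝕜 X]
    (f : X →L[𝕜] 𝕜) (ε : ℝ) : Set X :=
  {x | ‖x‖ ≤ 1 ∧ 1 - ε < RCLike.re (f x)}

/-- A Banach space is *lush* if for every `x, y` in the unit sphere and every `ε > 0` there is
a norm-one functional `f` such that `y` belongs to the slice `S(B_X, f, ε)` and the distance
from `x` to the convex hull of `𝕋 · S(B_X, f, ε)` is less than `ε`. -/
def IsLush (𝕜 X : Type*) [RCLike 𝕜] [NormedAddCommGroup X] [NormedSpace 𝕜 X]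
    [NormedSpace ℝ X] [IsScalarTower ℝ 𝕜 X] : Prop :=
  ∀ x y : X, ‖x‖ = 1 → ‖y‖ = 1 → ∀ ε : ℝ, 0 < ε →
    ∃ f : X →L[𝕜] 𝕜, ‖f‖ = 1 ∧ y ∈ lushSlice f ε ∧
      Metric.infDist x
        (convexHull ℝ {z | ∃ (θ : 𝕜) (w : X), ‖θ‖ = 1 ∧ w ∈ lushSlice f ε ∧ z = θ • w}) < ε

/-! Fix `T` with `‖T‖ = 1` and a small `ε`. Pick a unit vector `x` with `‖T x‖ > 1 - ε` and apply
lushness to `x` and `y = T x / ‖T x‖`: the functional `f` it provides has `Re f (T x) ≈ 1`, and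
since `x` is close to the convex hull of `𝕋 · S(B_X, f, ε)`, on which `Re (f ∘ T)` is bounded by
`sup_{w ∈ S} |f (T w)|`, some `w` in the slice has `|f (T w)| ≈ 1`. The pair `(w, f)` only almost
attains its norm (`Re f w > 1 - ε`); a perturbation of `w` in the direction of `T w`, normalised
and paired with a norming functional, turns it into an exact pair at a cost of `O(√ε)`. -/

open RCLike ComplexConjugate

theorem RCLike.exists_norm_eq_one_mul_eq_norm {𝕜 : Type*} [RCLike 𝕜] (z : 𝕜) :
    ∃ θ : 𝕜, ‖θ‖ = 1 ∧ θ * z = ‖z‖ := by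
  rcases eq_or_ne z 0 with rfl | hz
  · exact ⟨1, norm_one, by simp⟩
  · have hz' : (‖z‖ : 𝕜) ≠ 0 := ofReal_ne_zero.2 (norm_ne_zero_iff.2 hz)
    refine ⟨conj z / ‖z‖, ?_, ?_⟩
    · rw [norm_div, norm_conj, norm_ofReal, abs_norm, div_self (norm_ne_zero_iff.2 hz)]
    · rw [div_mul_eq_mul_div, conj_mul, sq, mul_div_assoc, div_self hz', mul_one]

section NumericalRadius

variable {𝕜 X : Type*} [RCLike 𝕜] [NormedAddCommGroup X] [NormedSpace 𝕜 X]

lemma ContinuousLinearMap.norm_apply_apply_le_opNorm (T : X →L[𝕜] X) {f : X →L[𝕜] 𝕜} {x : X}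
    (hf : ‖f‖ ≤ 1) (hx : ‖x‖ ≤ 1) : ‖f (T x)‖ ≤ ‖T‖ :=
  calc ‖f (T x)‖ ≤ ‖f‖ * ‖T x‖ := f.le_opNorm _
    _ ≤ 1 * (‖T‖ * 1) := by gcongr; exact T.le_opNorm_of_le hx
    _ = ‖T‖ := by ring

lemma numRadius_nonneg (T : X →L[𝕜] X) : 0 ≤ numRadius 𝕜 T :=
  Real.sSup_nonneg fun _ ⟨_, _, _, _, _, hr⟩ => hr ▸ norm_nonneg _

lemma numRadius_le_norm (T : X →L[𝕜] X) : numRadius 𝕜 T ≤ ‖T‖ :=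
  Real.sSup_le (fun _ ⟨_, _, hx, hf, _, hr⟩ => hr ▸ T.norm_apply_apply_le_opNorm hf.le hx.le)
    (norm_nonneg T)

lemma norm_apply_apply_le_numRadius (T : X →L[𝕜] X) {f : X →L[𝕜] 𝕜} {x : X} (hf : ‖f‖ = 1)
    (hx : ‖x‖ = 1) (hfx : f x = 1) : ‖f (T x)‖ ≤ numRadius 𝕜 T :=
  le_csSup ⟨‖T‖, fun _ ⟨_, _, hx, hf, _, hr⟩ => hr ▸ T.norm_apply_apply_le_opNorm hf.le hx.le⟩
    ⟨x, f, hx, hf, hfx, rfl⟩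

/-- The exact pair is `(p / ‖p‖, g)` with `p = w + s θ T w`, where `θ f (T w) = |f (T w)|` and
`g` norms `p`: `‖p‖ ≥ Re f p` forces `Re θ g (T w) ≥ |f (T w)| - s`, and `T p` differs from `T w`
by at most `s`. -/
lemma exists_norming_pair_of_almost_norming {T : X →L[𝕜] X} (hT : ‖T‖ ≤ 1)
    {f : X →L[𝕜] 𝕜} (hf : ‖f‖ ≤ 1) {w : X} (hw : ‖w‖ ≤ 1) {s : ℝ} (hs : 0 < s)
    (hfw : 1 - s ^ 2 ≤ re (f w)) (hfTw : 2 * s ≤ ‖f (T w)‖) :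
    ∃ (x : X) (g : X →L[𝕜] 𝕜), ‖x‖ = 1 ∧ ‖g‖ = 1 ∧ g x = 1 ∧
      ‖f (T w)‖ - 2 * s ≤ (1 + s) * ‖g (T x)‖ := by
  obtain ⟨θ, hθ, hθf⟩ := exists_norm_eq_one_mul_eq_norm (f (T w))
  have hTw : ‖T w‖ ≤ 1 := (T.le_opNorm_of_le hw).trans (by linarith)
  set p := w + ((s : 𝕜) * θ) • T w
  have hp_le : ‖p‖ ≤ 1 + s :=
    calc ‖p‖ ≤ ‖w‖ + s * ‖T w‖ := by
          grw [norm_add_le, norm_smul, norm_mul, hθ, norm_ofReal, abs_of_pos hs, mul_one]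
      _ ≤ 1 + s * 1 := by gcongr
      _ = 1 + s := by ring
  have hp_ge : 1 - s ^ 2 + s * ‖f (T w)‖ ≤ ‖p‖ := by
    have hfp : re (f p) = re (f w) + s * ‖f (T w)‖ := by
      rw [map_add, map_smul, smul_eq_mul, mul_assoc, hθf, ← ofReal_mul, map_add, ofReal_re]
    calc 1 - s ^ 2 + s * ‖f (T w)‖ ≤ re (f p) := by rw [hfp]; linarith
      _ ≤ ‖f p‖ := re_le_norm _
      _ ≤ ‖p‖ := (f.le_of_opNorm_le hf p).trans_eq (one_mul _)
  have hp_pos : 0 < ‖p‖ := by nlinarith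
  obtain ⟨g, hg, hgp⟩ := exists_dual_vector 𝕜 p hp_pos.ne'
  have hgTw : ‖p‖ - 1 ≤ s * re (θ * g (T w)) := by
    have hgw : re (g w) ≤ 1 :=
      (re_le_norm _).trans ((g.le_of_opNorm_le hg.le w).trans (by rwa [one_mul]))
    have hgp' : re (g p) = re (g w) + s * re (θ * g (T w)) := by
      rw [map_add, map_smul, smul_eq_mul, mul_assoc, map_add, re_ofReal_mul]
    rw [hgp, ofReal_re] at hgp'
    linarith
  have hgTTw : -1 ≤ re (θ * θ * g (T (T w))) := by
    have hle : ‖θ * θ * g (T (T w))‖ ≤ 1 := by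
      rw [norm_mul, norm_mul, hθ, one_mul, one_mul]
      exact (T.norm_apply_apply_le_opNorm hg.le hTw).trans hT
    linarith [neg_le_of_abs_le ((abs_re_le_norm _).trans hle)]
  have hgTp : ‖f (T w)‖ - 2 * s ≤ ‖g (T p)‖ := by
    have hre : re (θ * g (T p)) = re (θ * g (T w)) + s * re (θ * θ * g (T (T w))) := by
      rw [map_add, map_smul, map_add, map_smul, smul_eq_mul, mul_add, map_add, ← re_ofReal_mul]
      ring_nf
    calc ‖f (T w)‖ - 2 * s ≤ re (θ * g (T p)) := by rw [hre]; nlinarith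
      _ ≤ ‖θ * g (T p)‖ := re_le_norm _
      _ = ‖g (T p)‖ := by rw [norm_mul, hθ, one_mul]
  refine ⟨((‖p‖⁻¹ : ℝ) : 𝕜) • p, g, ?_, hg, ?_, ?_⟩
  · rw [norm_smul, norm_ofReal, abs_inv, abs_norm, inv_mul_cancel₀ hp_pos.ne']
  · rw [map_smul, hgp, smul_eq_mul, ← ofReal_mul, inv_mul_cancel₀ hp_pos.ne', ofReal_one]
  · rw [map_smul, map_smul, norm_smul, norm_ofReal, abs_inv, abs_norm]
    calc ‖f (T w)‖ - 2 * s ≤ ‖g (T p)‖ := hgTp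
      _ = ‖p‖ * (‖p‖⁻¹ * ‖g (T p)‖) := by field_simp
      _ ≤ (1 + s) * (‖p‖⁻¹ * ‖g (T p)‖) := by gcongr

lemma le_numRadius_of_almost_norming {T : X →L[𝕜] X} (hT : ‖T‖ ≤ 1)
    {f : X →L[𝕜] 𝕜} (hf : ‖f‖ ≤ 1) {w : X} (hw : ‖w‖ ≤ 1) {s : ℝ} (hs : 0 < s)
    (hfw : 1 - s ^ 2 ≤ re (f w)) : (‖f (T w)‖ - 2 * s) / (1 + s) ≤ numRadius 𝕜 T := by
  rcases lt_or_ge ‖f (T w)‖ (2 * s) with hlt | hge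
  · exact (div_nonpos_of_nonpos_of_nonneg (by linarith) (by linarith)).trans (numRadius_nonneg T)
  · obtain ⟨x, g, hx, hg, hgx, hle⟩ := exists_norming_pair_of_almost_norming hT hf hw hs hfw hge
    rw [div_le_iff₀' (by linarith)]
    exact hle.trans (by gcongr; exact norm_apply_apply_le_numRadius T hg hx hgx)

variable [NormedSpace ℝ X] [IsScalarTower ℝ 𝕜 X]

lemma re_le_of_mem_convexHull_circle_smul {φ : X →L[𝕜] 𝕜} {S : Set X} {c : ℝ}
    (hS : ∀ w ∈ S, ‖φ w‖ ≤ c) {z : X}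
    (hz : z ∈ convexHull ℝ {z | ∃ (θ : 𝕜) (w : X), ‖θ‖ = 1 ∧ w ∈ S ∧ z = θ • w}) :
    re (φ z) ≤ c := by
  have hconv : Convex ℝ {v : X | re (φ v) ≤ c} :=
    convex_halfSpace_le (reLm.comp (φ.toLinearMap.restrictScalars ℝ)).isLinear c
  refine convexHull_min ?_ hconv hz
  rintro _ ⟨θ, w, hθ, hw, rfl⟩
  calc re (φ (θ • w)) ≤ ‖φ (θ • w)‖ := re_le_norm _
    _ = ‖φ w‖ := by rw [map_smul, norm_smul, hθ, one_mul]
    _ ≤ c := hS w hw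

lemma IsLush.exists_mem_lushSlice_lt_norm_apply_apply (h : IsLush 𝕜 X) {T : X →L[𝕜] X}
    (hT : ‖T‖ = 1) {ε : ℝ} (hε : 0 < ε) (hε1 : ε < 1) :
    ∃ f : X →L[𝕜] 𝕜, ‖f‖ = 1 ∧ ∃ w ∈ lushSlice f ε, 1 - 3 * ε < ‖f (T w)‖ := by
  obtain ⟨x, hx, hTx⟩ : ∃ x : X, ‖x‖ = 1 ∧ 1 - ε < ‖T x‖ := by
    have hε' : ((1 - ε).toNNReal : ℝ) = 1 - ε := Real.coe_toNNReal _ (by linarith)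
    obtain ⟨x, hx, hTx⟩ := T.exists_nnnorm_eq_one_lt_apply_of_lt_opNNNorm
      (r := (1 - ε).toNNReal) (by rw [← NNReal.coe_lt_coe, hε', coe_nnnorm, hT]; linarith)
    exact ⟨x, congrArg NNReal.toReal hx, hε' ▸ hTx⟩
  have hTx_pos : 0 < ‖T x‖ := by linarith
  set y : X := ((‖T x‖⁻¹ : ℝ) : 𝕜) • T x
  have hy : ‖y‖ = 1 := by
    rw [norm_smul, norm_ofReal, abs_inv, abs_norm, inv_mul_cancel₀ hTx_pos.ne']
  obtain ⟨f, hf, hyf, hdist⟩ := h x y hx hy ε hε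
  have hfTx : (1 - ε) * (1 - ε) < re (f (T x)) := by
    have hTxy : f (T x) = ‖T x‖ * f y := by
      rw [map_smul, smul_eq_mul, ← mul_assoc, ← ofReal_mul, mul_inv_cancel₀ hTx_pos.ne',
        ofReal_one, one_mul]
    rw [hTxy, re_ofReal_mul]
    exact mul_lt_mul'' hTx hyf.2 (by linarith) (by linarith)
  have hy_mem : y ∈ {z | ∃ (θ : 𝕜) (w : X), ‖θ‖ = 1 ∧ w ∈ lushSlice f ε ∧ z = θ • w} :=
    ⟨1, y, norm_one, hyf, (one_smul 𝕜 y).symm⟩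
  obtain ⟨z, hz, hxz⟩ := (infDist_lt_iff ⟨y, subset_convexHull ℝ _ hy_mem⟩).1 hdist
  have hfTz : 1 - 3 * ε < re (f (T z)) := by
    have : re (f (T x)) - re (f (T z)) ≤ ε :=
      calc re (f (T x)) - re (f (T z)) = re (f (T (x - z))) := by simp only [map_sub]
        _ ≤ ‖f (T (x - z))‖ := re_le_norm _
        _ ≤ ‖T (x - z)‖ := (f.le_of_opNorm_le hf.le _).trans_eq (one_mul _)
        _ ≤ ‖x - z‖ := (T.le_of_opNorm_le hT.le _).trans_eq (one_mul _)
        _ ≤ ε := by rw [← dist_eq_norm]; exact hxz.le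
    nlinarith
  by_contra! hsmall
  exact hfTz.not_ge (re_le_of_mem_convexHull_circle_smul (φ := f.comp T) (hsmall f hf) hz)

lemma IsLush.numRadius_eq_one (h : IsLush 𝕜 X) {T : X →L[𝕜] X} (hT : ‖T‖ = 1) :
    numRadius 𝕜 T = 1 := by
  have hbound : ∀ s ∈ Set.Ioo (0 : ℝ) 1, (1 - 3 * s ^ 2 - 2 * s) / (1 + s) ≤ numRadius 𝕜 T := by
    rintro s ⟨hs0, hs1⟩
    obtain ⟨f, hf, w, ⟨hw, hfw⟩, hfTw⟩ :=
      h.exists_mem_lushSlice_lt_norm_apply_apply hT (pow_pos hs0 2) (by nlinarith)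
    exact (div_le_div_of_nonneg_right (by linarith) (by linarith)).trans
      (le_numRadius_of_almost_norming hT.le hf.le hw hs0 hfw.le)
  have hlim : Tendsto (fun s : ℝ => (1 - 3 * s ^ 2 - 2 * s) / (1 + s)) (𝓝[>] 0) (𝓝 1) := by
    have hcont : ContinuousAt (fun s : ℝ => (1 - 3 * s ^ 2 - 2 * s) / (1 + s)) 0 := by
      fun_prop (disch := norm_num)
    convert hcont.tendsto.mono_left nhdsWithin_le_nhds using 2
    norm_num
  exact le_antisymm (hT ▸ numRadius_le_norm T)
    (le_of_tendsto hlim (eventually_of_mem (Ioo_mem_nhdsGT one_pos) hbound))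

end NumericalRadius

theorem numIndex_eq_one_of_isLush_general (𝕜 X : Type*) [RCLike 𝕜] [NormedAddCommGroup X]
    [NormedSpace 𝕜 X] [NormedSpace ℝ X] [IsScalarTower ℝ 𝕜 X]
    [Nontrivial X] (h : IsLush 𝕜 X) : numIndex 𝕜 X = 1 := by
  have hradii : {r : ℝ | ∃ T : X →L[𝕜] X, ‖T‖ = 1 ∧ r = numRadius 𝕜 T} = {1} := by
    refine Set.eq_singleton_iff_unique_mem.2 ⟨⟨ContinuousLinearMap.id 𝕜 X,
      ContinuousLinearMap.norm_id, (h.numRadius_eq_one ContinuousLinearMap.norm_id).symm⟩, ?_⟩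
    rintro _ ⟨T, hT, rfl⟩
    exact h.numRadius_eq_one hT
  rw [numIndex, hradii, csInf_singleton]

/-- A nonzero lush Banach space has numerical index 1. -/
theorem numIndex_eq_one_of_isLush (𝕜 X : Type*) [RCLike 𝕜] [NormedAddCommGroup X]
    [NormedSpace 𝕜 X] [NormedSpace ℝ X] [IsScalarTower ℝ 𝕜 X] [CompleteSpace X]
    [Nontrivial X] (h : IsLush 𝕜 X) : numIndex 𝕜 X = 1 :=
  numIndex_eq_one_of_isLush_general 𝕜 X h
end

section
/- Let K be a compact Hausdorff space and let X be a C-rich closed subspace of C(K) (real or complex scalars). Then X is lush. -/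
open Filter Topology Metric

/-- A closed subspace `X` of `C(K)` is *C-rich* if for every nonempty open `U ⊆ K` and every
`ε > 0` there is a norm-one nonnegative function supported in `U` at distance less than `ε`
from `X`. -/
def IsCRich {K 𝕜 : Type*} [TopologicalSpace K] [CompactSpace K] [T2Space K] [RCLike 𝕜]
    (X : Submodule 𝕜 C(K, 𝕜)) : Prop :=
  ∀ U : Set K, IsOpen U → U.Nonempty → ∀ ε : ℝ, 0 < ε →
    ∃ h : C(K, 𝕜), ‖h‖ = 1 ∧ (∀ t, 0 ≤ RCLike.re (h t) ∧ RCLike.im (h t) = 0) ∧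
      Function.support ⇑h ⊆ U ∧ Metric.infDist h (X : Set C(K, 𝕜)) < ε

/-!
Given `x, y` on the unit sphere and a small `δ`, pick `t₁` with `|y t₁| = 1` and let `U` be the
open set where `|y| > 1 - δ` and `x` is `δ`-close to `x t₁`. C-richness gives `0 ≤ h ≤ 1` supported
in `U`, with `h t₀ = 1`, and `g ∈ X` that is `δ`-close to `h`. The functional is evaluation at
`t₀`, rotated and normalized so that `y` lies in its slice. For `|θ| = 1` the function
`x + (θ - x t₀) g ∈ X` has norm at most `1 + 4δ`, because `x` is almost constant where `h ≠ 0`,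
and value close to `θ` at `t₀`; divided by `1 + 4δ` it therefore lies in `𝕋 · S`. As
`θ ↦ x + (θ - x t₀) g` is real-affine and `x t₀` lies in the unit disc, the convex hull of the
unit circle, `x / (1 + 4δ)` lies in the convex hull of `𝕋 · S`.
-/

open RCLike ComplexConjugate

section Scalars

variable {𝕜 : Type*} [RCLike 𝕜]

lemma one_sub_le_re_conj_mul {θ z : 𝕜} (hθ : ‖θ‖ = 1) {η : ℝ} (hz : ‖z - θ‖ ≤ η) :
    1 - η ≤ re (conj θ * z) := by
  have hθθ : re (conj θ * θ) = 1 := by rw [RCLike.conj_mul, hθ]; simp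
  have hdev : |re (conj θ * (z - θ))| ≤ η :=
    (abs_re_le_norm _).trans (by rwa [norm_mul, norm_conj, hθ, one_mul])
  rw [show conj θ * z = conj θ * θ + conj θ * (z - θ) by ring, map_add, hθθ]
  linarith [neg_abs_le (re (conj θ * (z - θ)))]

lemma norm_add_sub_mul_ofReal_le {a c θ : 𝕜} (ha : ‖a‖ ≤ 1) (hθ : ‖θ‖ ≤ 1) {r : ℝ} (hr₀ : 0 ≤ r)
    (hr₁ : r ≤ 1) : ‖a + (θ - c) * r‖ ≤ 1 + r * ‖a - c‖ := by
  have hr : ∀ z : 𝕜, ‖(r : 𝕜) * z‖ = r * ‖z‖ := fun z => by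
    rw [norm_mul, norm_ofReal, abs_of_nonneg hr₀]
  have hr' : ‖((1 - r : ℝ) : 𝕜) * a‖ = (1 - r) * ‖a‖ := by
    rw [norm_mul, norm_ofReal, abs_of_nonneg (sub_nonneg.2 hr₁)]
  calc ‖a + (θ - c) * r‖ = ‖((1 - r : ℝ) : 𝕜) * a + (r : 𝕜) * θ + (r : 𝕜) * (a - c)‖ := by
        congr 1; push_cast; ring
    _ ≤ (1 - r) * ‖a‖ + r * ‖θ‖ + r * ‖a - c‖ := by
        rw [← hr, ← hr, ← hr']; exact norm_add₃_le
    _ ≤ 1 + r * ‖a - c‖ := by nlinarith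

end Scalars

section Slices

variable {𝕜 X : Type*} [RCLike 𝕜] [NormedAddCommGroup X] [NormedSpace 𝕜 X]

/-- The set `𝕋 · S(B_X, f, ε)`. -/
def rotatedSlice (f : X →L[𝕜] 𝕜) (ε : ℝ) : Set X :=
  {z | ∃ (θ : 𝕜) (w : X), ‖θ‖ = 1 ∧ w ∈ lushSlice f ε ∧ z = θ • w}

lemma lushSlice_mono (f : X →L[𝕜] 𝕜) {ε ε' : ℝ} (h : ε ≤ ε') :
    lushSlice f ε ⊆ lushSlice f ε' :=
  fun _ ⟨hw, hfw⟩ => ⟨hw, by linarith⟩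

lemma rotatedSlice_mono {f g : X →L[𝕜] 𝕜} {ε ε' : ℝ} (h : lushSlice f ε ⊆ lushSlice g ε') :
    rotatedSlice f ε ⊆ rotatedSlice g ε' := by
  rintro _ ⟨θ, w, hθ, hw, rfl⟩
  exact ⟨θ, w, hθ, h hw, rfl⟩

lemma rotatedSlice_subset_smul (f : X →L[𝕜] 𝕜) (ε : ℝ) {s : 𝕜} (hs : ‖s‖ = 1) :
    rotatedSlice f ε ⊆ rotatedSlice (s • f) ε := by
  have hs0 : s ≠ 0 := norm_ne_zero_iff.1 (by rw [hs]; exact one_ne_zero)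
  rintro _ ⟨θ, w, hθ, ⟨hw, hfw⟩, rfl⟩
  refine ⟨θ * s, s⁻¹ • w, by rw [norm_mul, hθ, hs, one_mul], ⟨?_, ?_⟩, ?_⟩
  · rwa [norm_smul, norm_inv, hs, inv_one, one_mul]
  · change 1 - ε < re (s * f (s⁻¹ • w))
    rwa [map_smul f, smul_eq_mul, mul_inv_cancel_left₀ hs0]
  · rw [smul_smul, mul_assoc, mul_inv_cancel₀ hs0, mul_one]

lemma lushSlice_subset_inv_norm_smul {ψ : X →L[𝕜] 𝕜} (hψ : ‖ψ‖ ≤ 1) {ε : ℝ} (hε : ε ≤ 1) :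
    lushSlice ψ ε ⊆ lushSlice ((‖ψ‖⁻¹ : 𝕜) • ψ) ε := by
  rintro w ⟨hw, hψw⟩
  refine ⟨hw, ?_⟩
  have hre_pos : 0 < re (ψ w) := by linarith
  have hψ_pos : 0 < ‖ψ‖ := by
    have := (re_le_norm (ψ w)).trans (ψ.le_opNorm_of_le hw)
    linarith
  change 1 - ε < re ((‖ψ‖⁻¹ : 𝕜) * ψ w)
  rw [← ofReal_inv, re_ofReal_mul]
  calc 1 - ε < re (ψ w) := hψw
    _ ≤ ‖ψ‖⁻¹ * re (ψ w) := le_mul_of_one_le_left hre_pos.le (one_le_inv₀ hψ_pos |>.2 hψ)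

lemma exists_norm_eq_one_mem_lushSlice {φ : X →L[𝕜] 𝕜} (hφ : ‖φ‖ ≤ 1) {ε : ℝ} (hε : ε ≤ 1)
    {y : X} (hy : ‖y‖ ≤ 1) (hφy : 1 - ε < ‖φ y‖) :
    ∃ f : X →L[𝕜] 𝕜, ‖f‖ = 1 ∧ y ∈ lushSlice f ε ∧ rotatedSlice φ ε ⊆ rotatedSlice f ε := by
  have hφy0 : φ y ≠ 0 := norm_pos_iff.1 (by linarith)
  obtain ⟨s, hs, hsφy⟩ : ∃ s : 𝕜, ‖s‖ = 1 ∧ s * φ y = ‖φ y‖ := by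
    refine ⟨conj (φ y) / ‖φ y‖, ?_, ?_⟩
    · rw [norm_div, norm_conj, norm_ofReal, abs_norm, div_self (norm_ne_zero_iff.2 hφy0)]
    · rw [div_mul_eq_mul_div, RCLike.conj_mul, sq, mul_div_assoc,
        div_self (ofReal_ne_zero.2 (norm_ne_zero_iff.2 hφy0)), mul_one]
  set ψ := s • φ
  have hψ : ‖ψ‖ ≤ 1 := (norm_smul_le s φ).trans (by rw [hs, one_mul]; exact hφ)
  have hyψ : y ∈ lushSlice ψ ε := ⟨hy, by change 1 - ε < re (s * φ y); rwa [hsφy, ofReal_re]⟩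
  have hψ0 : ψ ≠ 0 := by
    intro h
    have h' : s * φ y = 0 := DFunLike.congr_fun h y
    rw [hsφy, ofReal_eq_zero, norm_eq_zero] at h'
    exact hφy0 h'
  exact ⟨(‖ψ‖⁻¹ : 𝕜) • ψ, norm_smul_inv_norm hψ0, lushSlice_subset_inv_norm_smul hψ hε hyψ,
    (rotatedSlice_subset_smul φ ε hs).trans
      (rotatedSlice_mono (lushSlice_subset_inv_norm_smul hψ hε))⟩

variable [NormedSpace ℝ X] [IsScalarTower ℝ 𝕜 X]

lemma isLush_of_forall_le_one
    (h : ∀ x y : X, ‖x‖ = 1 → ‖y‖ = 1 → ∀ ε : ℝ, 0 < ε → ε ≤ 1 →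
      ∃ f : X →L[𝕜] 𝕜, ‖f‖ = 1 ∧ y ∈ lushSlice f ε ∧
        infDist x (convexHull ℝ (rotatedSlice f ε)) < ε) :
    IsLush 𝕜 X := by
  intro x y hx hy ε hε
  have hmin : min ε 1 ≤ ε := min_le_left ε 1
  obtain ⟨f, hf, hyf, hdist⟩ := h x y hx hy (min ε 1) (lt_min hε one_pos) (min_le_right ε 1)
  have hnonempty : (convexHull ℝ (rotatedSlice f (min ε 1))).Nonempty :=
    ⟨y, subset_convexHull ℝ _ ⟨1, y, norm_one, hyf, (one_smul 𝕜 y).symm⟩⟩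
  refine ⟨f, hf, lushSlice_mono f hmin hyf, ?_⟩
  calc infDist x (convexHull ℝ (rotatedSlice f ε))
      ≤ infDist x (convexHull ℝ (rotatedSlice f (min ε 1))) :=
        infDist_le_infDist_of_subset
          (convexHull_mono (rotatedSlice_mono (lushSlice_mono f hmin))) hnonempty
    _ < ε := hdist.trans_le hmin

lemma inv_smul_mem_rotatedSlice (f : X →L[𝕜] 𝕜) {ε M : ℝ} (hM : 0 < M) {z : X} (hz : ‖z‖ ≤ M)
    {θ : 𝕜} (hθ : ‖θ‖ = 1) (hre : (1 - ε) * M < re (conj θ * f z)) :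
    M⁻¹ • z ∈ rotatedSlice f ε := by
  refine ⟨θ, (conj θ * (M⁻¹ : ℝ)) • z, hθ, ⟨?_, ?_⟩, ?_⟩
  · rw [norm_smul, norm_mul, norm_conj, hθ, one_mul, norm_ofReal, abs_inv, abs_of_pos hM]
    exact inv_mul_le_one_of_le₀ hz hM.le
  · rw [map_smul, smul_eq_mul, mul_comm (conj θ), mul_assoc, re_ofReal_mul, lt_inv_mul_iff₀ hM,
      mul_comm]
    exact hre
  · rw [smul_smul, ← mul_assoc, RCLike.mul_conj, hθ, ofReal_one, one_pow, one_mul,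
      real_smul_eq_coe_smul (K := 𝕜)]

lemma mem_convexHull_of_forall_norm_eq_one {s : Set X} {x v : X} {c : 𝕜} (hc : ‖c‖ ≤ 1)
    (h : ∀ θ : 𝕜, ‖θ‖ = 1 → x + (θ - c) • v ∈ s) : x ∈ convexHull ℝ s := by
  let φ : 𝕜 →ᵃ[ℝ] X := ((LinearMap.toSpanSingleton 𝕜 X v).restrictScalars ℝ).toAffineMap +
    AffineMap.const ℝ 𝕜 (x - c • v)
  have hφ : ∀ θ, φ θ = x + (θ - c) • v := fun θ => by
    simp [φ, sub_smul]
    abel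
  have hc : c ∈ convexHull ℝ (sphere (0 : 𝕜) 1) := by
    rw [convexHull_sphere_eq_closedBall 0 zero_le_one]
    simpa using hc
  have hsub : φ '' sphere 0 1 ⊆ s := by
    rintro _ ⟨θ, hθ, rfl⟩
    rw [hφ]
    exact h θ (by simpa using hθ)
  have hx : φ c ∈ convexHull ℝ (φ '' sphere 0 1) := φ.image_convexHull _ ▸ ⟨c, hc, rfl⟩
  simpa [hφ] using convexHull_mono hsub hx

end Slices

lemma dist_inv_smul_self_le {E : Type*} [NormedAddCommGroup E] [NormedSpace ℝ E] {x : E}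
    (hx : ‖x‖ ≤ 1) {M : ℝ} (hM : 1 ≤ M) : dist x (M⁻¹ • x) ≤ M - 1 := by
  have hM0 : 0 < M := by linarith
  have hMinv : M⁻¹ ≤ 1 := inv_le_one_of_one_le₀ hM
  calc dist x (M⁻¹ • x) = ‖(1 - M⁻¹) • x‖ := by rw [dist_eq_norm, sub_smul, one_smul]
    _ = (1 - M⁻¹) * ‖x‖ := by rw [norm_smul, Real.norm_of_nonneg (by linarith)]
    _ ≤ 1 - M⁻¹ := mul_le_of_le_one_right (by linarith) hx
    _ = (M - 1) * M⁻¹ := by field_simp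
    _ ≤ M - 1 := mul_le_of_le_one_right (by linarith) hMinv

lemma ContinuousMap.exists_norm_apply_eq_norm {K E : Type*} [TopologicalSpace K] [CompactSpace K]
    [NormedAddCommGroup E] (f : C(K, E)) (hf : f ≠ 0) : ∃ t, ‖f t‖ = ‖f‖ := by
  have : Nonempty K := by
    by_contra hK
    exact hf (ContinuousMap.ext fun t => (hK ⟨t⟩).elim)
  obtain ⟨t, -, ht⟩ :=
    isCompact_univ.exists_isMaxOn Set.univ_nonempty f.continuous.norm.continuousOn
  exact ⟨t, le_antisymm (f.norm_coe_le_norm t)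
    ((f.norm_le (norm_nonneg _)).2 fun s => ht (Set.mem_univ s))⟩

section ContinuousFunctions

variable {K 𝕜 : Type*} [TopologicalSpace K] [CompactSpace K] [RCLike 𝕜]

lemma exists_apply_eq_one_of_norm_eq_one {h : C(K, 𝕜)} (hh₁ : ‖h‖ = 1)
    (hh : ∀ t, 0 ≤ re (h t) ∧ im (h t) = 0) : ∃ t, h t = 1 := by
  obtain ⟨t, ht⟩ := h.exists_norm_apply_eq_norm (fun h0 => by simp [h0] at hh₁)
  have hreal : (re (h t) : 𝕜) = h t := conj_eq_iff_re.1 (conj_eq_iff_im.2 (hh t).2)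
  have hre : re (h t) = 1 := by
    rw [← hh₁, ← ht, ← hreal, norm_of_nonneg (hh t).1, ofReal_re]
  exact ⟨t, by rw [← hreal, hre, ofReal_one]⟩

lemma norm_add_sub_smul_le {x h : C(K, 𝕜)} (hx : ‖x‖ ≤ 1) (hh₁ : ‖h‖ ≤ 1)
    (hh : ∀ t, 0 ≤ re (h t) ∧ im (h t) = 0) {θ c : 𝕜} (hθ : ‖θ‖ ≤ 1) {η : ℝ} (hη : 0 ≤ η)
    (hosc : ∀ t, h t ≠ 0 → ‖x t - c‖ ≤ η) : ‖x + (θ - c) • h‖ ≤ 1 + η := by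
  refine (ContinuousMap.norm_le _ (by linarith)).2 fun t => ?_
  set r := re (h t)
  have hr : (r : 𝕜) = h t := conj_eq_iff_re.1 (conj_eq_iff_im.2 (hh t).2)
  have hr₁ : r ≤ 1 := (re_le_norm _).trans ((h.norm_coe_le_norm t).trans hh₁)
  have hosc' : r * ‖x t - c‖ ≤ η := by
    by_cases h0 : h t = 0
    · simp [r, h0, hη]
    · exact (mul_le_of_le_one_left (norm_nonneg _) hr₁).trans (hosc t h0)
  calc ‖(x + (θ - c) • h) t‖ = ‖x t + (θ - c) * r‖ := by rw [hr]; rfl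
    _ ≤ 1 + r * ‖x t - c‖ :=
        norm_add_sub_mul_ofReal_le ((x.norm_coe_le_norm t).trans hx) hθ (hh t).1 hr₁
    _ ≤ 1 + η := by linarith

def pointEval (X : Submodule 𝕜 C(K, 𝕜)) (t : K) : X →L[𝕜] 𝕜 :=
  (ContinuousMap.evalCLM 𝕜 t).comp X.subtypeL

lemma norm_pointEval_le (X : Submodule 𝕜 C(K, 𝕜)) (t : K) : ‖pointEval X t‖ ≤ 1 :=
  ContinuousLinearMap.opNorm_le_bound _ zero_le_one fun x => by
    rw [one_mul]; exact (x : C(K, 𝕜)).norm_coe_le_norm t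

lemma inv_smul_mem_convexHull_rotatedSlice_pointEval (X : Submodule 𝕜 C(K, 𝕜)) {x g : X}
    {h : C(K, 𝕜)} {t₀ : K} {δ ε : ℝ} (hx : ‖x‖ ≤ 1) (hh₁ : ‖h‖ ≤ 1)
    (hh : ∀ t, 0 ≤ re (h t) ∧ im (h t) = 0) (ht₀ : h t₀ = 1) (hgh : dist h g ≤ δ)
    (hosc : ∀ t, h t ≠ 0 → ‖(x : C(K, 𝕜)) t - (x : C(K, 𝕜)) t₀‖ ≤ 2 * δ) (hδ : 0 ≤ δ)
    (hδε : 6 * δ < ε) :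
    (1 + 4 * δ)⁻¹ • x ∈ convexHull ℝ (rotatedSlice (pointEval X t₀) ε) := by
  set c := (x : C(K, 𝕜)) t₀
  have hc : ‖c‖ ≤ 1 := ((x : C(K, 𝕜)).norm_coe_le_norm t₀).trans hx
  refine mem_convexHull_of_forall_norm_eq_one (v := (1 + 4 * δ)⁻¹ • g) hc fun θ hθ => ?_
  have hgh' : ‖(θ - c) • ((g : C(K, 𝕜)) - h)‖ ≤ 2 * δ := by
    rw [norm_smul]
    exact mul_le_mul ((norm_sub_le _ _).trans (by linarith))
      (by rwa [← dist_eq_norm, dist_comm]) (norm_nonneg _) zero_le_two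
  rw [smul_comm, ← smul_add]
  refine inv_smul_mem_rotatedSlice _ (by linarith) ?_ hθ ?_
  · calc ‖x + (θ - c) • g‖ = ‖((x : C(K, 𝕜)) + (θ - c) • h) + (θ - c) • ((g : C(K, 𝕜)) - h)‖ := by
          rw [smul_sub, add_add_sub_cancel]; rfl
      _ ≤ (1 + 2 * δ) + 2 * δ :=
          norm_add_le_of_le (norm_add_sub_smul_le hx hh₁ hh hθ.le (by linarith) hosc) hgh'
      _ = 1 + 4 * δ := by ring
  · have hev : ‖((x + (θ - c) • g : X) : C(K, 𝕜)) t₀ - θ‖ ≤ 2 * δ := by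
      calc ‖((x + (θ - c) • g : X) : C(K, 𝕜)) t₀ - θ‖ = ‖((θ - c) • ((g : C(K, 𝕜)) - h)) t₀‖ := by
            simp only [Submodule.coe_add, Submodule.coe_smul, ContinuousMap.add_apply,
              ContinuousMap.smul_apply, ContinuousMap.sub_apply, smul_eq_mul, ht₀]
            congr 1
            ring
        _ ≤ 2 * δ := (ContinuousMap.norm_coe_le_norm _ t₀).trans hgh'
    calc (1 - ε) * (1 + 4 * δ) < 1 - 2 * δ := by nlinarith
      _ ≤ re (conj θ * pointEval X t₀ (x + (θ - c) • g)) := one_sub_le_re_conj_mul hθ hev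

end ContinuousFunctions

theorem isLush_of_isCRich_general {K 𝕜 : Type*} [TopologicalSpace K] [CompactSpace K] [T2Space K]
    [RCLike 𝕜] (X : Submodule 𝕜 C(K, 𝕜)) (hrich : IsCRich X) : IsLush 𝕜 ↥X := by
  refine isLush_of_forall_le_one fun x y hx hy ε hε hε₁ => ?_
  set δ := ε / 8 with hδ_def
  have hδ : 0 < δ := by positivity
  have hy' : ‖(y : C(K, 𝕜))‖ = 1 := hy
  obtain ⟨t₁, ht₁⟩ := (y : C(K, 𝕜)).exists_norm_apply_eq_norm (by simp [← norm_ne_zero_iff, hy'])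
  let U := {t | 1 - δ < ‖(y : C(K, 𝕜)) t‖} ∩ {t | dist ((x : C(K, 𝕜)) t) ((x : C(K, 𝕜)) t₁) < δ}
  have hU : IsOpen U := (isOpen_lt continuous_const (y : C(K, 𝕜)).continuous.norm).inter
    (isOpen_lt ((x : C(K, 𝕜)).continuous.dist continuous_const) continuous_const)
  obtain ⟨h, hh₁, hh, hsupp, hdist⟩ := hrich U hU ⟨t₁, by simp [U, ht₁, hy', hδ]⟩ δ hδ
  obtain ⟨g, hg, hgh⟩ := (infDist_lt_iff ⟨0, X.zero_mem⟩).1 hdist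
  obtain ⟨t₀, ht₀⟩ := exists_apply_eq_one_of_norm_eq_one hh₁ hh
  obtain ⟨hyt₀, hxt₀⟩ : t₀ ∈ U := hsupp (by simp [ht₀])
  have hosc : ∀ t, h t ≠ 0 → ‖(x : C(K, 𝕜)) t - (x : C(K, 𝕜)) t₀‖ ≤ 2 * δ := fun t ht => by
    have hxt : dist ((x : C(K, 𝕜)) t) ((x : C(K, 𝕜)) t₁) < δ := (hsupp ht).2
    rw [← dist_eq_norm]
    linarith [dist_triangle_right ((x : C(K, 𝕜)) t) ((x : C(K, 𝕜)) t₀) ((x : C(K, 𝕜)) t₁),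
      hxt₀.out]
  obtain ⟨f, hf, hyf, hsub⟩ := exists_norm_eq_one_mem_lushSlice (norm_pointEval_le X t₀) hε₁ hy.le
    (show 1 - ε < ‖(y : C(K, 𝕜)) t₀‖ by linarith [hyt₀.out])
  have hmem := inv_smul_mem_convexHull_rotatedSlice_pointEval X (g := ⟨g, hg⟩) (ε := ε)
    hx.le hh₁.le hh ht₀ hgh.le hosc hδ.le (by linarith)
  refine ⟨f, hf, hyf, ?_⟩
  calc infDist x (convexHull ℝ (rotatedSlice f ε))
      ≤ dist x ((1 + 4 * δ)⁻¹ • x) := infDist_le_dist_of_mem (convexHull_mono hsub hmem)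
    _ ≤ 1 + 4 * δ - 1 := dist_inv_smul_self_le hx.le (by linarith)
    _ < ε := by linarith

/-- A C-rich closed subspace of C(K), K compact Hausdorff, is lush. -/
theorem isLush_of_isCRich {K 𝕜 : Type*} [TopologicalSpace K] [CompactSpace K] [T2Space K]
    [RCLike 𝕜] (X : Submodule 𝕜 C(K, 𝕜)) (hclosed : IsClosed (X : Set C(K, 𝕜)))
    (hrich : IsCRich X) : IsLush 𝕜 ↥X :=
  isLush_of_isCRich_general X hrich
end

section
/- Let K be a compact Hausdorff space and let f₁, …, fₙ be continuous linear functionals on C(K). If fᵢ(χ_{t}) = 0 for every isolated point t of K and every i = 1, …, n (where χ_{t} ∈ C(K) is the characteristic function of the singleton {t}, which is continuous since t is isolated), then the subspace Y = ∩_{i=1}^{n} ker fᵢ is a C-rich subspace of C(K). -/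
/-!
If `U` contains an isolated point `t`, the indicator of `{t}` already lies in `Y`. Otherwise `U`
is infinite and contains `N` disjoint nonempty open sets carrying norm-one bumps `h j`. Testing a
functional `φ` on `∑ j, c j • h j` with unimodular `c j` gives `∑ j, ‖φ (h j)‖ ≤ ‖φ‖`, so some
bump has `∑ i, ‖f i (h j)‖ ≤ (∑ i, ‖f i‖) / N`. As `Y` has finite codimension,
`dist (h, Y) ≤ C * ∑ i, ‖f i h‖` for some constant `C`, which is small once `N` is large.
-/

open Filter Topology Metric

open Function

section FiniteCodimension

variable {𝕜 E : Type*} [NontriviallyNormedField 𝕜] [CompleteSpace 𝕜]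
  [SeminormedAddCommGroup E] [NormedSpace 𝕜 E]

theorem LinearMap.exists_infDist_ker_le {G : Type*} [NormedAddCommGroup G] [NormedSpace 𝕜 G]
    [FiniteDimensional 𝕜 G] (F : E →ₗ[𝕜] G) :
    ∃ C, 0 ≤ C ∧ ∀ g, infDist g (LinearMap.ker F : Set E) ≤ C * ‖F g‖ := by
  obtain ⟨σ, hσ⟩ := F.rangeRestrict.exists_rightInverse_of_surjective F.range_rangeRestrict
  -- `σ` is defined on the finite-dimensional space `range F`, hence bounded
  let σ' := LinearMap.toContinuousLinearMap σ
  refine ⟨‖σ'‖, norm_nonneg _, fun g => ?_⟩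
  have hmem : g - σ (F.rangeRestrict g) ∈ LinearMap.ker F := by
    have hFσ : F (σ (F.rangeRestrict g)) = F g := congr(Subtype.val ($hσ (F.rangeRestrict g)))
    rw [LinearMap.mem_ker, map_sub, hFσ, sub_self]
  calc infDist g (LinearMap.ker F : Set E) ≤ dist g (g - σ (F.rangeRestrict g)) :=
        infDist_le_dist_of_mem hmem
    _ = ‖σ' (F.rangeRestrict g)‖ := by rw [dist_eq_norm, sub_sub_cancel]; rfl
    _ ≤ ‖σ'‖ * ‖F g‖ := σ'.le_opNorm _

theorem exists_infDist_iInf_ker_le {ι : Type*} [Fintype ι] (φ : ι → E →ₗ[𝕜] 𝕜) :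
    ∃ C, 0 ≤ C ∧ ∀ g, infDist g ((⨅ i, LinearMap.ker (φ i) : Submodule 𝕜 E) : Set E) ≤
      C * ∑ i, ‖φ i g‖ := by
  obtain ⟨C, hC, hdist⟩ := (LinearMap.pi φ).exists_infDist_ker_le
  refine ⟨C, hC, fun g => ?_⟩
  have hpi : ‖LinearMap.pi φ g‖ ≤ ∑ i, ‖φ i g‖ :=
    (pi_norm_le_iff_of_nonneg (by positivity)).2 fun i =>
      Finset.single_le_sum (f := fun i => ‖φ i g‖) (fun _ _ => norm_nonneg _) (Finset.mem_univ i)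
  rw [← LinearMap.ker_pi]
  exact (hdist g).trans (by gcongr)

end FiniteCodimension

theorem ContinuousMap.norm_sum_le_of_pairwise_disjoint_support {K E ι : Type*}
    [TopologicalSpace K] [CompactSpace K] [SeminormedAddCommGroup E] [Fintype ι]
    {g : ι → C(K, E)} (hg : Pairwise (Disjoint on fun j => support (g j))) {r : ℝ} (hr : 0 ≤ r)
    (hgr : ∀ j, ‖g j‖ ≤ r) : ‖∑ j, g j‖ ≤ r := by
  rw [ContinuousMap.norm_le _ hr]
  intro t
  rw [ContinuousMap.sum_apply]
  by_cases ht : ∃ j, g j t ≠ 0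
  · obtain ⟨j, hj⟩ := ht
    rw [Finset.sum_eq_single j (fun k _ hkj => ?_) (by simp)]
    · exact ((g j).norm_coe_le_norm t).trans (hgr j)
    · by_contra hk
      exact Set.disjoint_left.1 (hg hkj) hk hj
  · push Not at ht
    simp [ht, hr]

section ContinuousFunctions

variable {K 𝕜 : Type*} [TopologicalSpace K] [CompactSpace K] [RCLike 𝕜]

theorem ContinuousLinearMap.sum_norm_apply_le_opNorm_of_pairwise_disjoint_support {ι : Type*}
    [Fintype ι] (φ : C(K, 𝕜) →L[𝕜] 𝕜) {h : ι → C(K, 𝕜)} (hh : ∀ j, ‖h j‖ ≤ 1)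
    (hd : Pairwise (Disjoint on fun j => support (h j))) :
    ∑ j, ‖φ (h j)‖ ≤ ‖φ‖ := by
  -- no case split on `φ (h j) = 0` is needed, since `x / 0 = 0`
  set c : ι → 𝕜 := fun j => starRingEnd 𝕜 (φ (h j)) / ‖φ (h j)‖
  have hc : ∀ j, ‖c j‖ ≤ 1 := fun j => by
    simpa [c, norm_div] using div_self_le_one ‖φ (h j)‖
  have hcφ : ∀ j, c j * φ (h j) = ‖φ (h j)‖ := fun j => by
    rw [div_mul_eq_mul_div, RCLike.conj_mul, sq, mul_self_div_self]
  have hnorm : ‖∑ j, c j • h j‖ ≤ 1 :=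
    ContinuousMap.norm_sum_le_of_pairwise_disjoint_support
      (hd.mono fun j k hjk => hjk.mono (support_const_smul_subset _ _)
        (support_const_smul_subset _ _))
      zero_le_one fun j => (norm_smul_le _ _).trans (mul_le_one₀ (hc j) (norm_nonneg _) (hh j))
  calc ∑ j, ‖φ (h j)‖ = ‖φ (∑ j, c j • h j)‖ := by
        simp only [map_sum, map_smul, smul_eq_mul, hcφ]
        rw [← RCLike.ofReal_sum, RCLike.norm_ofReal,
          abs_of_nonneg (Finset.sum_nonneg fun _ _ => norm_nonneg _)]
    _ ≤ ‖φ‖ * ‖∑ j, c j • h j‖ := φ.le_opNorm _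
    _ ≤ ‖φ‖ := mul_le_of_le_one_right (norm_nonneg _) hnorm

theorem exists_sum_norm_apply_le_div {ι κ : Type*} [Fintype ι] [Fintype κ] [Nonempty κ]
    (f : ι → C(K, 𝕜) →L[𝕜] 𝕜) {h : κ → C(K, 𝕜)} (hh : ∀ j, ‖h j‖ ≤ 1)
    (hd : Pairwise (Disjoint on fun j => support (h j))) :
    ∃ j, ∑ i, ‖f i (h j)‖ ≤ (∑ i, ‖f i‖) / Fintype.card κ := by
  have hsum : ∑ j, ∑ i, ‖f i (h j)‖ ≤ ∑ _j : κ, (∑ i, ‖f i‖) / Fintype.card κ := by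
    rw [Finset.sum_comm, Finset.sum_const, Finset.card_univ, nsmul_eq_mul,
      mul_div_cancel₀ _ (Nat.cast_ne_zero.2 Fintype.card_ne_zero)]
    exact Finset.sum_le_sum fun i _ =>
      (f i).sum_norm_apply_le_opNorm_of_pairwise_disjoint_support hh hd
  obtain ⟨j, -, hj⟩ := Finset.exists_le_of_sum_le Finset.univ_nonempty hsum
  exact ⟨j, hj⟩

theorem ContinuousMap.exists_bump [T2Space K] {V : Set K} (hV : IsOpen V) {x : K} (hx : x ∈ V) :
    ∃ h : C(K, 𝕜), h x = 1 ∧ ‖h‖ = 1 ∧ (∀ t, 0 ≤ RCLike.re (h t) ∧ RCLike.im (h t) = 0) ∧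
      support h ⊆ V := by
  obtain ⟨g, hg0, hg1, hg01⟩ := exists_continuous_zero_one_of_isClosed hV.isClosed_compl
    isClosed_singleton (Set.disjoint_singleton_right.2 (not_not_intro hx))
  let h : C(K, 𝕜) := ⟨fun t => (g t : 𝕜), by fun_prop⟩
  have hx1 : h x = 1 := by simp [h, hg1 rfl]
  refine ⟨h, hx1, le_antisymm ?_ ?_, fun t => by simp [h, (hg01 t).1], ?_⟩
  · refine (ContinuousMap.norm_le _ zero_le_one).2 fun t => ?_
    simpa [h, abs_le] using ⟨by linarith [(hg01 t).1], (hg01 t).2⟩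
  · simpa [hx1] using h.norm_coe_le_norm x
  · intro t ht
    by_contra htV
    simp [h, hg0 htV] at ht

end ContinuousFunctions

theorem exists_pairwise_disjoint_open_subsets {X : Type*} [TopologicalSpace X] [T2Space X]
    {U : Set X} (hU : IsOpen U) (hne : U.Nonempty) (hiso : ∀ x ∈ U, ¬ IsOpen ({x} : Set X))
    (N : ℕ) :
    ∃ x : Fin N → X, ∃ V : Fin N → Set X, (∀ j, IsOpen (V j) ∧ x j ∈ V j ∧ V j ⊆ U) ∧
      Pairwise (Disjoint on V) := by
  have hinf : U.Infinite := fun hfin => by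
    obtain ⟨x, hx⟩ := hne
    exact hiso x hx (isOpen_singleton_of_finite_mem_nhds x (hU.mem_nhds hx) hfin)
  let x : Fin N → X := fun j => hinf.natEmbedding U j
  have hx_inj : Injective x := fun j k hjk =>
    Fin.val_injective ((hinf.natEmbedding U).injective (Subtype.val_injective hjk))
  obtain ⟨W, hW, hWd⟩ := (Set.finite_range x).t2_separation
  refine ⟨x, fun j => W (x j) ∩ U,
    fun j => ⟨(hW _).2.inter hU, ⟨(hW _).1, (hinf.natEmbedding U j).2⟩, Set.inter_subset_right⟩, fun j k hjk => ?_⟩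
  exact (hWd (Set.mem_range_self j) (Set.mem_range_self k) (hx_inj.ne hjk)).mono
    Set.inter_subset_left Set.inter_subset_left

/-- If each functional `f i` annihilates the characteristic function of every isolated point
of `K`, then the intersection of their kernels is a C-rich subspace of `C(K)`. -/
theorem isCRich_iInf_ker {K 𝕜 : Type*} [TopologicalSpace K] [CompactSpace K] [T2Space K]
    [RCLike 𝕜] {n : ℕ} (f : Fin n → (C(K, 𝕜) →L[𝕜] 𝕜))
    (hf : ∀ i : Fin n, ∀ t : K, IsOpen ({t} : Set K) →
      ∀ g : C(K, 𝕜), (g t = 1 ∧ ∀ s : K, s ≠ t → g s = 0) → f i g = 0) :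
    IsCRich (⨅ i : Fin n, LinearMap.ker (f i : C(K, 𝕜) →ₗ[𝕜] 𝕜)) := by
  intro U hU hUne ε hε
  by_cases hiso : ∃ t ∈ U, IsOpen ({t} : Set K)
  · obtain ⟨t, htU, ht⟩ := hiso
    obtain ⟨h, ht1, hnorm, hreal, hsupp⟩ := ContinuousMap.exists_bump (𝕜 := 𝕜) ht rfl
    have hmem : h ∈ ⨅ i, LinearMap.ker (f i : C(K, 𝕜) →ₗ[𝕜] 𝕜) :=
      Submodule.mem_iInf _ |>.2 fun i => hf i t ht h
        ⟨ht1, fun s hs => notMem_support.1 fun hs' => hs (hsupp hs')⟩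
    exact ⟨h, hnorm, hreal, hsupp.trans (Set.singleton_subset_iff.2 htU),
      by rwa [infDist_zero_of_mem hmem]⟩
  push Not at hiso
  obtain ⟨C, hC, hdist⟩ := exists_infDist_iInf_ker_le fun i => (f i : C(K, 𝕜) →ₗ[𝕜] 𝕜)
  set S := ∑ i, ‖f i‖
  obtain ⟨N, hN⟩ := exists_nat_gt (C * S / ε)
  have hNpos : (0 : ℝ) < N := lt_of_le_of_lt (by positivity) hN
  obtain ⟨x, V, hV, hVd⟩ := exists_pairwise_disjoint_open_subsets hU hUne hiso N
  choose h _ hnorm hreal hsupp using fun j =>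
    ContinuousMap.exists_bump (𝕜 := 𝕜) (hV j).1 (hV j).2.1
  have : Nonempty (Fin N) := ⟨⟨0, Nat.cast_pos.1 hNpos⟩⟩
  obtain ⟨j, hj⟩ := exists_sum_norm_apply_le_div f (fun j => (hnorm j).le)
    (hVd.mono fun j k hjk => hjk.mono (hsupp j) (hsupp k))
  rw [Fintype.card_fin] at hj
  refine ⟨h j, hnorm j, hreal j, (hsupp j).trans (hV j).2.2, ?_⟩
  calc infDist (h j) _ ≤ C * ∑ i, ‖f i (h j)‖ := hdist (h j)
    _ ≤ C * (S / N) := by gcongr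
    _ < ε := by
      rw [← mul_div_assoc, div_lt_iff₀ hNpos]
      rw [div_lt_iff₀ hε] at hN
      linarith
end

section
/- Let K be a compact Hausdorff space and let f₁, …, fₙ be continuous linear functionals on C(K). If the subspace Y = ∩_{i=1}^{n} ker fᵢ is a C-rich subspace of C(K), then fᵢ(χ_{t}) = 0 for every isolated point t of K and every i = 1, …, n (where χ_{t} ∈ C(K) is the characteristic function of the singleton {t}). -/
open Filter Topology Metric

/-!
A nonnegative function of norm one supported in an open singleton `{t}` can only be `χ_{t}`,
so C-richness of `Y` says that `χ_{t}` lies in the closure of `Y`. Being an intersection of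
kernels of continuous functionals, `Y` is closed, hence contains `χ_{t}`.
-/

open scoped ComplexOrder in
theorem RCLike.eq_one_of_norm_eq_one_of_nonneg {𝕜 : Type*} [RCLike 𝕜] {z : 𝕜}
    (hre : 0 ≤ RCLike.re z) (him : RCLike.im z = 0) (hz : ‖z‖ = 1) : z = 1 := by
  rw [← RCLike.norm_of_nonneg' (RCLike.nonneg_iff.mpr ⟨hre, him⟩), hz, RCLike.ofReal_one]

theorem ContinuousMap.norm_eq_norm_apply_of_support_subset_singleton {X E : Type*}
    [TopologicalSpace X] [CompactSpace X] [NormedAddCommGroup E] {h : C(X, E)} {t : X}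
    (hs : Function.support h ⊆ {t}) : ‖h‖ = ‖h t‖ := by
  refine le_antisymm ((h.norm_le (norm_nonneg _)).mpr fun s => ?_) (h.norm_coe_le_norm t)
  by_cases hst : s = t
  · rw [hst]
  · rw [Function.notMem_support.mp fun hs' => hst (hs hs'), norm_zero]
    exact norm_nonneg _

theorem IsCRich.mem_of_isOpen_singleton {K 𝕜 : Type*} [TopologicalSpace K] [CompactSpace K]
    [T2Space K] [RCLike 𝕜] {X : Submodule 𝕜 C(K, 𝕜)} (hX : IsCRich X)
    (hclosed : IsClosed (X : Set C(K, 𝕜))) {t : K} (ht : IsOpen ({t} : Set K)) {g : C(K, 𝕜)}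
    (hgt : g t = 1) (hg : ∀ s, s ≠ t → g s = 0) : g ∈ X := by
  rw [← SetLike.mem_coe, hclosed.mem_iff_infDist_zero ⟨0, X.zero_mem⟩]
  refine le_antisymm (le_of_forall_pos_lt_add fun ε hε => ?_) infDist_nonneg
  obtain ⟨h, hnorm, hnonneg, hsupp, hdist⟩ := hX {t} ht ⟨t, rfl⟩ ε hε
  have hht : h t = 1 := RCLike.eq_one_of_norm_eq_one_of_nonneg (hnonneg t).1 (hnonneg t).2 <|
    (ContinuousMap.norm_eq_norm_apply_of_support_subset_singleton hsupp).symm.trans hnorm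
  have hgh : g = h := by
    ext s
    by_cases hst : s = t
    · rw [hst, hgt, hht]
    · rw [hg s hst, Function.notMem_support.mp fun hs => hst (hsupp hs)]
  rwa [zero_add, hgh]

/-- If the intersection of the kernels of the functionals `f i` is a C-rich subspace of
`C(K)`, then each `f i` annihilates the characteristic function of every isolated point
of `K`. -/
theorem eq_zero_of_isCRich_iInf_ker {K 𝕜 : Type*} [TopologicalSpace K] [CompactSpace K]
    [T2Space K] [RCLike 𝕜] {n : ℕ} (f : Fin n → (C(K, 𝕜) →L[𝕜] 𝕜))
    (hrich : IsCRich (⨅ i : Fin n, LinearMap.ker (f i : C(K, 𝕜) →ₗ[𝕜] 𝕜))) :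
    ∀ i : Fin n, ∀ t : K, IsOpen ({t} : Set K) →
      ∀ g : C(K, 𝕜), (g t = 1 ∧ ∀ s : K, s ≠ t → g s = 0) → f i g = 0 := by
  intro i t ht g ⟨hgt, hg⟩
  have hclosed : IsClosed ((⨅ i : Fin n, LinearMap.ker (f i : C(K, 𝕜) →ₗ[𝕜] 𝕜) :
      Submodule 𝕜 C(K, 𝕜)) : Set C(K, 𝕜)) := by
    rw [Submodule.coe_iInf]
    exact isClosed_iInter fun j => (f j).isClosed_ker
  exact (Submodule.mem_iInf _).mp (hrich.mem_of_isOpen_singleton hclosed ht hgt hg) i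
end

section
/- Let K be the compact Hausdorff space consisting of three disjoint copies of the one-point compactification ℕ ∪ {∞} of ℕ (i.e., K = (ℕ ∪ {∞}) × {1,2,3}), with points at infinity ∞₁, ∞₂, ∞₃. Then the closed subspace X = {f ∈ C(K, ℝ) : f(∞₁) + f(∞₂) + f(∞₃) = 0} is a C-rich subspace of C(K, ℝ). -/
open Filter Topology Metric OnePoint

/-- The compact Hausdorff space consisting of three disjoint copies of the one-point
compactification `ℕ ∪ {∞}` of `ℕ`. -/
abbrev ThreeCopies : Type := OnePoint ℕ × Fin 3

/-- The subspace `X = {f ∈ C(K, ℝ) : f(∞₁) + f(∞₂) + f(∞₃) = 0}` of `C(K, ℝ)`, where `K`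
is three disjoint copies of `ℕ ∪ {∞}` with points at infinity `∞₁, ∞₂, ∞₃`. -/
noncomputable def inftySumZeroSubspace : Submodule ℝ C(ThreeCopies, ℝ) where
  carrier := {f | f (∞, 0) + f (∞, 1) + f (∞, 2) = 0}
  add_mem' := by
    intro f g hf hg
    simp only [Set.mem_setOf_eq, ContinuousMap.add_apply] at *
    linarith
  zero_mem' := by simp
  smul_mem' := by
    intro r f hf
    simp only [Set.mem_setOf_eq, ContinuousMap.smul_apply, smul_eq_mul] at *
    rw [← mul_add, ← mul_add, hf, mul_zero]

section CRich

variable {K 𝕜 : Type*} [TopologicalSpace K] [CompactSpace K] [RCLike 𝕜]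

theorem exists_norm_eq_one_support_eq_of_isClopen {s : Set K} (hs : IsClopen s)
    (hne : s.Nonempty) :
    ∃ h : C(K, 𝕜), ‖h‖ = 1 ∧ (∀ t, 0 ≤ RCLike.re (h t) ∧ RCLike.im (h t) = 0) ∧
      Function.support ⇑h = s := by
  have hcoe : ⇑(LocallyConstant.charFn 𝕜 hs : C(K, 𝕜)) = s.indicator 1 := rfl
  refine ⟨LocallyConstant.charFn 𝕜 hs, le_antisymm ?_ ?_, fun t => ?_, ?_⟩
  · refine (ContinuousMap.norm_le _ zero_le_one).2 fun t => ?_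
    rw [hcoe]
    by_cases ht : t ∈ s <;> simp [ht]
  · obtain ⟨a, ha⟩ := hne
    simpa [hcoe, ha] using
      ContinuousMap.norm_coe_le_norm (LocallyConstant.charFn 𝕜 hs : C(K, 𝕜)) a
  · rw [hcoe]
    by_cases ht : t ∈ s <;> simp [ht]
  · rw [hcoe, Set.support_indicator, Function.support_one, Set.inter_univ]

variable [T2Space K]

theorem isCRich_of_forall_exists_mem {X : Submodule 𝕜 C(K, 𝕜)}
    (H : ∀ U : Set K, IsOpen U → U.Nonempty →
      ∃ h : C(K, 𝕜), ‖h‖ = 1 ∧ (∀ t, 0 ≤ RCLike.re (h t) ∧ RCLike.im (h t) = 0) ∧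
        Function.support ⇑h ⊆ U ∧ h ∈ X) :
    IsCRich X := by
  intro U hU hne ε hε
  obtain ⟨h, hnorm, hpos, hsupp, hX⟩ := H U hU hne
  exact ⟨h, hnorm, hpos, hsupp, (infDist_zero_of_mem hX).trans_lt hε⟩

end CRich

theorem ThreeCopies.exists_coe_mem {U : Set ThreeCopies} (hU : IsOpen U) (hne : U.Nonempty) :
    ∃ (n : ℕ) (i : Fin 3), ((n : OnePoint ℕ), i) ∈ U := by
  have hdense : DenseRange (Prod.map ((↑) : ℕ → OnePoint ℕ) (id : Fin 3 → Fin 3)) :=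
    denseRange_coe.prodMap denseRange_id
  obtain ⟨⟨n, i⟩, hn⟩ := hdense.exists_mem_open hU hne
  exact ⟨n, i, hn⟩

theorem ThreeCopies.isClopen_singleton_coe (n : ℕ) (i : Fin 3) :
    IsClopen {((n : OnePoint ℕ), i)} := by
  refine ⟨isClosed_singleton, ?_⟩
  rw [← Set.singleton_prod_singleton, ← Set.image_singleton]
  exact (isOpen_image_coe.2 (isOpen_discrete _)).prod (isOpen_discrete _)

/-- The subspace `{f ∈ C(K, ℝ) : f(∞₁) + f(∞₂) + f(∞₃) = 0}`, for `K` three disjoint copies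
of `ℕ ∪ {∞}`, is a C-rich subspace of `C(K, ℝ)`. -/
theorem isCRich_inftySumZeroSubspace : IsCRich inftySumZeroSubspace := by
  refine isCRich_of_forall_exists_mem fun U hU hne => ?_
  obtain ⟨n, i, hnU⟩ := ThreeCopies.exists_coe_mem hU hne
  obtain ⟨h, hnorm, hpos, hsupp⟩ :=
    exists_norm_eq_one_support_eq_of_isClopen (𝕜 := ℝ) (ThreeCopies.isClopen_singleton_coe n i)
      (Set.singleton_nonempty _)
  have h_infty (j : Fin 3) : h (∞, j) = 0 :=
    Function.notMem_support.1 (by simp [hsupp])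
  refine ⟨h, hnorm, hpos, hsupp ▸ Set.singleton_subset_iff.2 hnU, ?_⟩
  show h (∞, 0) + h (∞, 1) + h (∞, 2) = 0
  simp [h_infty]
end
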